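/- arXiv:1711.06216 — 3 statements merged into one kernel-verified Lean document; each statement's English description precedes it below -/
import Mathlib

section
/- Let Ω be a finite set, p : Ω → (0,1), and let Ω_p be the random subset including each ω independently with probability p(ω). Let γ_1, …, γ_N be subsets of Ω, X_i the indicator that γ_i ⊆ Ω_p, and X = X_1 + ⋯ + X_N. Then P[X = 0] ≥ ∏_{i=1}^{N} (1 − E[X_i]). -/
/-!
The binomial measure `S ↦ ∏_{ω ∈ S} p ω · ∏_{ω ∉ S} (1 - p ω)` on `Finset Ω` is a product
measure, hence log-modular: `μ A · μ B = μ (A ∩ B) · μ (A ∪ B)`. The FKG inequality for such a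
measure, applied inductively, gives the Harris inequality `E[∏ fᵢ] ≥ ∏ E[fᵢ]` for nonnegative
decreasing functions. Taking `fᵢ` to be the indicator of `γᵢ ⊄ S`, whose expectation is
`1 - ∏_{ω ∈ γᵢ} p ω`, yields the theorem.
-/

open Finset

section Harris

variable {α β ι : Type*} [DistribLattice α] [Fintype α]
  [CommSemiring β] [LinearOrder β] [IsStrictOrderedRing β] [ExistsAddOfLE β] {μ : α → β}

theorem fkg_prod (hμ₀ : 0 ≤ μ) (hμ : ∀ a b, μ a * μ b ≤ μ (a ⊓ b) * μ (a ⊔ b))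
    (hμ₁ : ∑ a, μ a = 1) (s : Finset ι) {f : ι → α → β} (hf₀ : ∀ i, 0 ≤ f i)
    (hf : ∀ i, Monotone (f i)) :
    ∏ i ∈ s, ∑ a, μ a * f i a ≤ ∑ a, μ a * ∏ i ∈ s, f i a := by
  classical
  induction s using Finset.induction with
  | empty => simp [hμ₁]
  | @insert j s hj ih =>
    have hprod₀ : 0 ≤ fun a ↦ ∏ i ∈ s, f i a := fun a ↦ prod_nonneg fun i _ ↦ hf₀ i a
    have hprod : Monotone fun a ↦ ∏ i ∈ s, f i a := fun a b hab ↦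
      prod_le_prod (fun i _ ↦ hf₀ i a) fun i _ ↦ hf i hab
    calc ∏ i ∈ insert j s, ∑ a, μ a * f i a
        = (∑ a, μ a * f j a) * ∏ i ∈ s, ∑ a, μ a * f i a := prod_insert hj
      _ ≤ (∑ a, μ a * f j a) * ∑ a, μ a * ∏ i ∈ s, f i a :=
          mul_le_mul_of_nonneg_left ih <| sum_nonneg fun a _ ↦ mul_nonneg (hμ₀ a) (hf₀ j a)
      _ ≤ (∑ a, μ a) * ∑ a, μ a * (f j a * ∏ i ∈ s, f i a) :=
          fkg _ _ _ hμ₀ (hf₀ j) hprod₀ (hf j) hprod hμ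
      _ = ∑ a, μ a * ∏ i ∈ insert j s, f i a := by simp only [hμ₁, one_mul, prod_insert hj]

theorem fkg_prod_of_antitone (hμ₀ : 0 ≤ μ) (hμ : ∀ a b, μ a * μ b ≤ μ (a ⊓ b) * μ (a ⊔ b))
    (hμ₁ : ∑ a, μ a = 1) (s : Finset ι) {f : ι → α → β} (hf₀ : ∀ i, 0 ≤ f i)
    (hf : ∀ i, Antitone (f i)) :
    ∏ i ∈ s, ∑ a, μ a * f i a ≤ ∑ a, μ a * ∏ i ∈ s, f i a :=
  fkg_prod (α := αᵒᵈ) (μ := μ ∘ OrderDual.ofDual) (fun _ ↦ hμ₀ _)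
    (fun _ _ ↦ (hμ _ _).trans_eq (mul_comm _ _)) hμ₁ s hf₀ fun i ↦ (hf i).dual_left

end Harris

section BinomialWeight

variable {Ω R : Type*} [Fintype Ω] [DecidableEq Ω] [CommRing R]

/-- The probability that the random subset `Ω_p` equals `S`. -/
def binomialWeight (p : Ω → R) (S : Finset Ω) : R :=
  (∏ ω ∈ S, p ω) * ∏ ω ∈ Sᶜ, (1 - p ω)

theorem binomialWeight_nonneg [PartialOrder R] [IsOrderedRing R] {p : Ω → R}
    (hp₀ : ∀ ω, 0 ≤ p ω) (hp₁ : ∀ ω, p ω ≤ 1) (S : Finset Ω) : 0 ≤ binomialWeight p S :=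
  mul_nonneg (prod_nonneg fun ω _ ↦ hp₀ ω) (prod_nonneg fun ω _ ↦ sub_nonneg.2 (hp₁ ω))

theorem sum_binomialWeight (p : Ω → R) : ∑ S, binomialWeight p S = 1 := by
  simp [binomialWeight, ← Fintype.prod_add]

theorem binomialWeight_mul (p : Ω → R) (A B : Finset Ω) :
    binomialWeight p A * binomialWeight p B =
      binomialWeight p (A ∩ B) * binomialWeight p (A ∪ B) := by
  simp only [binomialWeight, compl_inter, compl_union]
  rw [mul_mul_mul_comm, ← prod_union_inter, mul_comm (∏ ω ∈ A ∪ B, p ω),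
    ← prod_union_inter (s₁ := Aᶜ), mul_mul_mul_comm]

theorem sum_binomialWeight_filter_superset (p : Ω → R) (γ : Finset Ω) :
    ∑ S with γ ⊆ S, binomialWeight p S = ∏ ω ∈ γ, p ω := by
  -- Expand `∏ ω, (p ω + q ω)` where `q` vanishes on `γ`: only the `S ⊇ γ` survive.
  have hterm (S : Finset Ω) : (∏ ω ∈ S, p ω) * ∏ ω ∈ Sᶜ, (if ω ∉ γ then 1 - p ω else 0) =
      if γ ⊆ S then binomialWeight p S else 0 := by
    have hsubset : (∀ ω ∈ Sᶜ, ω ∉ γ) ↔ γ ⊆ S := by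
      simp only [mem_compl, not_imp_not]; rfl
    simp only [prod_ite_zero, hsubset, mul_ite, mul_zero, binomialWeight]
  have hfactor (ω : Ω) : p ω + (if ω ∉ γ then 1 - p ω else 0) = if ω ∈ γ then p ω else 1 := by
    split_ifs <;> first | contradiction | ring
  calc ∑ S with γ ⊆ S, binomialWeight p S
      = ∑ S, (∏ ω ∈ S, p ω) * ∏ ω ∈ Sᶜ, (if ω ∉ γ then 1 - p ω else 0) := by
        rw [sum_filter]; exact (sum_congr rfl fun S _ ↦ hterm S).symm
    _ = ∏ ω, (p ω + if ω ∉ γ then 1 - p ω else 0) := (Fintype.prod_add _ _).symm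
    _ = ∏ ω ∈ γ, p ω := by rw [prod_congr rfl fun ω _ ↦ hfactor ω, prod_ite_mem, univ_inter]

theorem sum_binomialWeight_filter_not_superset (p : Ω → R) (γ : Finset Ω) :
    ∑ S with ¬ γ ⊆ S, binomialWeight p S = 1 - ∏ ω ∈ γ, p ω := by
  rw [← sum_binomialWeight p, ← sum_filter_add_sum_filter_not univ (γ ⊆ ·),
    sum_binomialWeight_filter_superset, add_sub_cancel_left]

end BinomialWeight

/-- Harris inequality consequence: the probability that the binomial random
subset `Ω_p` contains none of the sets `γ i` is at least
`∏ i (1 − E[X_i])`, where `E[X_i] = ∏_{ω ∈ γ i} p ω`. -/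
theorem prob_none_ge_prod {Ω : Type*} [Fintype Ω] [DecidableEq Ω]
    (p : Ω → ℝ) (hp : ∀ ω, 0 < p ω ∧ p ω < 1) {N : ℕ} (γ : Fin N → Finset Ω) :
    ∑ S ∈ Finset.univ.powerset.filter (fun S : Finset Ω => ∀ i, ¬ γ i ⊆ S),
        (∏ ω ∈ S, p ω) * ∏ ω ∈ Sᶜ, (1 - p ω)
      ≥ ∏ i : Fin N, (1 - ∏ ω ∈ γ i, p ω) := by
  let avoids (i : Fin N) (S : Finset Ω) : ℝ := if ¬ γ i ⊆ S then 1 else 0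
  have havoids : ∀ i, Antitone (avoids i) := fun i A B hAB ↦ by
    by_cases hA : γ i ⊆ A
    · simp [avoids, hA, hA.trans hAB]
    · simp only [avoids, hA, not_false_eq_true, if_true]
      split_ifs <;> norm_num
  have harris := fkg_prod_of_antitone
    (binomialWeight_nonneg (fun ω ↦ (hp ω).1.le) fun ω ↦ (hp ω).2.le)
    (fun A B ↦ (binomialWeight_mul p A B).le) (sum_binomialWeight p) univ
    (fun i S ↦ by positivity) havoids
  simp only [avoids, mul_boole, ← sum_filter, sum_binomialWeight_filter_not_superset,
    Fintype.prod_ite_zero, prod_const_one] at harris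
  rw [powerset_univ]
  exact harris
end

section
/- Let F be a 2-balanced graph with at least two edges, i.e., m_2(F) = (e_F − 1)/(v_F − 2) where m_2(F) = max{(e_H−1)/(v_H−2) : H ⊆ F, e_H > 1}. Then m_*(F) = m_2(F), where m_*(F) = min{(e_F − e_H)/(v_F − v_H) : H ⊆ F, v_H < v_F, e_H > 0}. -/
open Finset

/-! Write `d = (e_F - 1) / (v_F - 2)`. By 2-balancedness every subgraph `H` with at least two
edges satisfies `e_H - 1 ≤ d (v_H - 2)`, and so does every `H` with a single edge, as `v_H ≥ 2`.
Subtracting this from `e_F - 1 = d (v_F - 2)` gives `d (v_F - v_H) ≤ e_F - e_H` for every `H`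
with an edge and fewer vertices than `F`, so `m_*(F) ≥ d`; a single edge attains `d`. -/

lemma Nat.three_le_of_two_le_choose_two {n : ℕ} (h : 2 ≤ n.choose 2) : 3 ≤ n := by
  by_contra! hlt
  have := h.trans (Nat.choose_le_choose 2 (Nat.le_of_lt_succ hlt))
  rw [Nat.choose_self] at this
  omega

lemma le_csSup_setOf_exists_eq {α β : Type*} [Finite α] [ConditionallyCompleteLattice β]
    {P : α → Prop} (f : α → β) {a : α} (ha : P a) : f a ≤ sSup {b | ∃ a, P a ∧ b = f a} :=
  le_csSup ((Set.finite_range f).subset (by rintro _ ⟨a, -, rfl⟩; exact ⟨a, rfl⟩)).bddAbove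
    ⟨a, ha, rfl⟩

namespace SimpleGraph

variable {V : Type*} {G : SimpleGraph V}

lemma ncard_verts_subgraphOfAdj {u v : V} (h : G.Adj u v) :
    (G.subgraphOfAdj h).verts.ncard = 2 := by
  rw [subgraphOfAdj_verts, Set.ncard_pair h.ne]

lemma ncard_edgeSet_subgraphOfAdj {u v : V} (h : G.Adj u v) :
    (G.subgraphOfAdj h).edgeSet.ncard = 1 := by
  rw [edgeSet_subgraphOfAdj, Set.ncard_singleton]

namespace Subgraph

instance [Finite V] : Finite G.Subgraph :=
  Finite.of_injective (fun H : G.Subgraph => (H.verts, H.Adj)) fun _ _ h =>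
    Subgraph.ext (congrArg Prod.fst h) (congrArg Prod.snd h)

lemma ncard_edgeSet_le_choose_two [Finite V] (H : G.Subgraph) :
    H.edgeSet.ncard ≤ H.verts.ncard.choose 2 := by
  classical
  have hfin := H.verts.toFinite
  calc H.edgeSet.ncard
      ≤ ((hfin.toFinset.offDiag.image Sym2.mk.uncurry : Finset (Sym2 V)) : Set (Sym2 V)).ncard := by
        refine Set.ncard_le_ncard (fun e he => ?_) (Finset.finite_toSet _)
        induction e using Sym2.ind with
        | _ u v =>
          rw [Subgraph.mem_edgeSet] at he
          simp only [coe_image, Set.mem_image, mem_coe, mem_offDiag, Set.Finite.mem_toFinset]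
          exact ⟨(u, v), ⟨H.edge_vert he, H.edge_vert he.symm, he.ne⟩, rfl⟩
    _ = H.verts.ncard.choose 2 := by
        rw [Set.ncard_coe_finset, Sym2.card_image_offDiag, Set.ncard_eq_toFinset_card _ hfin]

lemma two_le_ncard_verts [Finite V] {H : G.Subgraph} (h : 0 < H.edgeSet.ncard) :
    2 ≤ H.verts.ncard := by
  by_contra! hlt
  have := H.ncard_edgeSet_le_choose_two
  rw [Nat.choose_eq_zero_of_lt hlt] at this
  omega

lemma three_le_ncard_verts [Finite V] {H : G.Subgraph} (h : 1 < H.edgeSet.ncard) :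
    3 ≤ H.verts.ncard :=
  Nat.three_le_of_two_le_choose_two (h.trans_le H.ncard_edgeSet_le_choose_two)

lemma sub_one_le_mul_sub_two [Finite V] {d : ℝ} (hd : 0 ≤ d)
    (hdens : ∀ K : G.Subgraph, 1 < K.edgeSet.ncard →
      ((K.edgeSet.ncard : ℝ) - 1) / ((K.verts.ncard : ℝ) - 2) ≤ d)
    {H : G.Subgraph} (h : 0 < H.edgeSet.ncard) :
    (H.edgeSet.ncard : ℝ) - 1 ≤ d * ((H.verts.ncard : ℝ) - 2) := by
  rcases (Nat.one_le_iff_ne_zero.2 h.ne').eq_or_lt with h1 | h2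
  · have hv : (2 : ℝ) ≤ H.verts.ncard := by exact_mod_cast two_le_ncard_verts h
    rw [← h1, Nat.cast_one, sub_self]
    exact mul_nonneg hd (sub_nonneg.2 hv)
  · have hv : (3 : ℝ) ≤ H.verts.ncard := by exact_mod_cast three_le_ncard_verts h2
    exact (div_le_iff₀ (by linarith)).1 (hdens H h2)

end Subgraph

end SimpleGraph

theorem mstar_eq_m2_of_two_balanced_general {V : Type*} [Fintype V]
    (F : SimpleGraph V) [DecidableRel F.Adj]
    (he : 2 ≤ F.edgeFinset.card)
    (hbal : sSup {q : ℝ | ∃ H : F.Subgraph, 1 < H.edgeSet.ncard ∧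
        q = ((H.edgeSet.ncard : ℝ) - 1) / ((H.verts.ncard : ℝ) - 2)}
      = ((F.edgeFinset.card : ℝ) - 1) / ((Fintype.card V : ℝ) - 2)) :
    sInf {q : ℝ | ∃ H : F.Subgraph, H.verts.ncard < Fintype.card V ∧
        0 < H.edgeSet.ncard ∧
        q = ((F.edgeFinset.card : ℝ) - (H.edgeSet.ncard : ℝ)) /
          ((Fintype.card V : ℝ) - (H.verts.ncard : ℝ))}
      = ((F.edgeFinset.card : ℝ) - 1) / ((Fintype.card V : ℝ) - 2) := by
  set d := ((F.edgeFinset.card : ℝ) - 1) / ((Fintype.card V : ℝ) - 2)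
  have hn : 3 ≤ Fintype.card V :=
    Nat.three_le_of_two_le_choose_two (he.trans F.card_edgeFinset_le_card_choose_two)
  have hnR : (3 : ℝ) ≤ Fintype.card V := by exact_mod_cast hn
  have hmR : (2 : ℝ) ≤ F.edgeFinset.card := by exact_mod_cast he
  have hd : d * ((Fintype.card V : ℝ) - 2) = F.edgeFinset.card - 1 :=
    div_mul_cancel₀ _ (by linarith)
  have hdens (H : F.Subgraph) (h : 0 < H.edgeSet.ncard) :
      (H.edgeSet.ncard : ℝ) - 1 ≤ d * ((H.verts.ncard : ℝ) - 2) :=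
    H.sub_one_le_mul_sub_two (div_nonneg (by linarith) (by linarith))
      (fun K hK => (le_csSup_setOf_exists_eq (α := F.Subgraph) _ hK).trans_eq hbal) h
  obtain ⟨⟨u, v⟩, hemem⟩ := card_pos.mp (by omega : 0 < F.edgeFinset.card)
  have huv : F.Adj u v := by simpa using hemem
  refine IsLeast.csInf_eq ⟨⟨F.subgraphOfAdj huv, ?_, ?_, ?_⟩, ?_⟩
  · rw [SimpleGraph.ncard_verts_subgraphOfAdj]; omega
  · rw [SimpleGraph.ncard_edgeSet_subgraphOfAdj]; omega
  · rw [SimpleGraph.ncard_verts_subgraphOfAdj, SimpleGraph.ncard_edgeSet_subgraphOfAdj]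
    norm_num [d]
  · rintro q ⟨H, hv, hpos, rfl⟩
    have hvR : (H.verts.ncard : ℝ) < Fintype.card V := by exact_mod_cast hv
    rw [le_div_iff₀ (sub_pos.2 hvR)]
    linarith [hdens H hpos]

/-- For a 2-balanced graph `F` with at least two edges, `m_*(F) = m₂(F)`. -/
theorem mstar_eq_m2_of_two_balanced {V : Type*} [Fintype V] [DecidableEq V]
    (F : SimpleGraph V) [DecidableRel F.Adj]
    (he : 2 ≤ F.edgeFinset.card)
    (hbal : sSup {q : ℝ | ∃ H : F.Subgraph, 1 < H.edgeSet.ncard ∧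
        q = ((H.edgeSet.ncard : ℝ) - 1) / ((H.verts.ncard : ℝ) - 2)}
      = ((F.edgeFinset.card : ℝ) - 1) / ((Fintype.card V : ℝ) - 2)) :
    sInf {q : ℝ | ∃ H : F.Subgraph, H.verts.ncard < Fintype.card V ∧
        0 < H.edgeSet.ncard ∧
        q = ((F.edgeFinset.card : ℝ) - (H.edgeSet.ncard : ℝ)) /
          ((Fintype.card V : ℝ) - (H.verts.ncard : ℝ))}
      = ((F.edgeFinset.card : ℝ) - 1) / ((Fintype.card V : ℝ) - 2) :=
  mstar_eq_m2_of_two_balanced_general F he hbal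
end

section
/- Let W be a finite set, G a graph on a superset of W, and for each connected subset V ⊆ W with max V = max W (call the family of such 𝒞_W), let Π^C_V(W) denote the set of partitions π of W containing a part P ⊇ V such that V is a union of connected components of the induced subgraph G[P]. Then {Π^C_V(W) : V ∈ 𝒞_W} is a partition of the set Π(W) of all partitions of W. -/
/-!
The part `P` of `π` containing `m = max W` is forced, and inside `G[P]` the only connected
set containing `m` that is a union of components of `G[P]` is the component of `m` itself:
connectedness puts the whole set in that component, closedness puts the whole component in it.
-/

namespace SimpleGraph

variable {α : Type*} {G : SimpleGraph α} {s : Set α}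

/-- `V ∩ s` is a union of connected components of the induced subgraph `G[s]`. -/
def IsUnionOfComponentsIn (G : SimpleGraph α) (s V : Set α) : Prop :=
  ∀ v w : s, (v : α) ∈ V → (G.induce s).Reachable v w → (w : α) ∈ V

namespace ConnectedComponent

theorem connected_induce_image_supp (C : (G.induce s).ConnectedComponent) :
    (G.induce (Subtype.val '' C.supp)).Connected := by
  let f : C.toSimpleGraph →g G.induce (Subtype.val '' C.supp) :=
    { toFun := fun x ↦ ⟨x.1.1, x.1, x.2, rfl⟩
      map_rel' := id }
  have hf : Function.Surjective f := by
    rintro ⟨_, x, hx, rfl⟩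
    exact ⟨⟨x, hx⟩, rfl⟩
  exact C.connected_toSimpleGraph.map f hf

theorem isUnionOfComponentsIn_image_supp (C : (G.induce s).ConnectedComponent) :
    G.IsUnionOfComponentsIn s (Subtype.val '' C.supp) := by
  rintro v w ⟨x, hx, hxv⟩ hvw
  obtain rfl : x = v := Subtype.ext hxv
  refine ⟨w, ?_, rfl⟩
  rw [mem_supp_iff] at hx ⊢
  rw [← hx, ConnectedComponent.eq]
  exact hvw.symm

end ConnectedComponent

theorem eq_image_supp_of_isUnionOfComponentsIn {V : Set α} {m : α} (hm : m ∈ V) (hVs : V ⊆ s)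
    (hconn : (G.induce V).Connected) (hclosed : G.IsUnionOfComponentsIn s V) :
    V = Subtype.val '' ((G.induce s).connectedComponentMk ⟨m, hVs hm⟩).supp := by
  ext v
  constructor
  · intro hv
    refine ⟨⟨v, hVs hv⟩, ?_, rfl⟩
    rw [ConnectedComponent.mem_supp_iff, ConnectedComponent.eq]
    exact (hconn.preconnected ⟨v, hv⟩ ⟨m, hm⟩).map (G.induceHomOfLE hVs).toHom
  · rintro ⟨x, hx, rfl⟩
    rw [ConnectedComponent.mem_supp_iff, ConnectedComponent.eq] at hx
    exact hclosed _ x hm hx.symm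

end SimpleGraph

/-- Every partition `π` of `W` lies in exactly one class `Π^C_V(W)`, where `V`
ranges over connected subsets of `W` containing (equivalently, with maximum
equal to) `max W`, and `π ∈ Π^C_V(W)` means that some part `P ∈ π` contains `V`
and `V` is a union of connected components of the induced subgraph `G[P]`. -/
theorem partitions_classes_partition (G : SimpleGraph ℕ) (W : Finset ℕ)
    (hW : W.Nonempty) (π : Finpartition W) :
    ∃! V : Finset ℕ,
      (V ⊆ W ∧ W.max' hW ∈ V ∧ (G.induce (V : Set ℕ)).Connected) ∧
      (∃ P ∈ π.parts, V ⊆ P ∧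
        ∀ (v w : (P : Set ℕ)), (v : ℕ) ∈ V →
          (G.induce (P : Set ℕ)).Reachable v w → (w : ℕ) ∈ V) := by
  set m := W.max' hW
  obtain ⟨P, hP, hmP⟩ := π.exists_mem (W.max'_mem hW)
  set C := (G.induce (P : Set ℕ)).connectedComponentMk ⟨m, hmP⟩
  have hCP : Subtype.val '' C.supp ⊆ P := Subtype.coe_image_subset _ _
  obtain ⟨V, hV⟩ := (P.finite_toSet.subset hCP).exists_finset_coe
  have hVP : V ⊆ P := Finset.coe_subset.1 (hV ▸ hCP)
  refine ⟨V, ⟨⟨hVP.trans (π.le hP), ?_, ?_⟩, P, hP, hVP, ?_⟩, ?_⟩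
  · rw [← Finset.mem_coe, hV]
    exact ⟨_, rfl, rfl⟩
  · exact hV ▸ C.connected_induce_image_supp
  · exact (hV ▸ C.isUnionOfComponentsIn_image_supp : G.IsUnionOfComponentsIn P V)
  rintro V' ⟨⟨-, hmV', hconn⟩, P', hP', hV'P', hclosed⟩
  obtain rfl : P' = P := π.eq_of_mem_parts hP' hP (hV'P' hmV') hmP
  exact Finset.coe_injective <|
    hV ▸ SimpleGraph.eq_image_supp_of_isUnionOfComponentsIn hmV' hV'P' hconn hclosed
end
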